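/- arXiv:0803.0957 — 3 statements merged into one kernel-verified Lean document; each statement's English description precedes it below -/
import Mathlib

section
/- The function b solves the mixed problem on the sector with zero data: b extends continuously to the closed sector {(r cos θ, r sin θ) : r ≥ 0, 0 ≤ θ ≤ α} with value 0 at the origin; b(t, 0) = 0 for every t > 0 (vanishing Dirichlet data on the ray θ = 0); and for every r > 0 the directional derivative of (the real-analytic extension of) b at the point (r cos α, r sin α) in the unit direction (−sin α, cos α) normal to the ray θ = α equals 0 (vanishing Neumann data on the ray θ = α). -/
/-! Rotating the branch cut of `z ^ β` to the ray of argument `α / 2 + π`, which misses the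
enlarged sector `-δ < θ < α + δ`, gives a function holomorphic near that sector and continuous
at `0` (as `β > 0`), whose imaginary part agrees with `b` in polar coordinates; this is the
continuous extension. It also makes `b` differentiable on the ray `θ = α`, where its normal
derivative is `r⁻¹ ∂_θ (r ^ β sin (β θ)) = β r ^ (β - 1) cos (β α) = 0` because `β α = π / 2`. -/

def openSector (α : ℝ) : Set (ℝ × ℝ) :=
  {p : ℝ × ℝ | ∃ r θ : ℝ, 0 < r ∧ 0 < θ ∧ θ < α ∧
    p = (r * Real.cos θ, r * Real.sin θ)}

def closedSector (α : ℝ) : Set (ℝ × ℝ) :=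
  {p : ℝ × ℝ | ∃ r θ : ℝ, 0 ≤ r ∧ 0 ≤ θ ∧ θ ≤ α ∧
    p = (r * Real.cos θ, r * Real.sin θ)}

open Complex Filter Set Topology

namespace Complex

/-- The branch of `z ^ c` whose cut is the ray of argument `φ + π`. -/
noncomputable def rotCpow (φ : ℝ) (c z : ℂ) : ℂ :=
  exp (c * φ * I) * (exp (-(φ * I)) * z) ^ c

variable {φ : ℝ} {c : ℂ}

theorem rotCpow_exp {w : ℂ} (h : w.im - φ ∈ Ioc (-Real.pi) Real.pi) :
    rotCpow φ c (exp w) = exp (c * w) := by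
  have hw : exp (-(φ * I)) * exp w = exp (w - φ * I) := by rw [← exp_add]; ring_nf
  have him : (w - φ * I).im = w.im - φ := by simp
  rw [rotCpow, hw, cpow_def_of_ne_zero (exp_ne_zero _), log_exp (him ▸ h.1) (him ▸ h.2),
    ← exp_add]
  ring_nf

theorem rotCpow_zero (hc : c ≠ 0) : rotCpow φ c 0 = 0 := by
  simp [rotCpow, zero_cpow hc]

theorem continuousAt_rotCpow_zero (hc : 0 < c.re) : ContinuousAt (rotCpow φ c) 0 :=
  continuousAt_const.mul <| (continuousAt_cpow_const_of_re_pos (by simp) hc).comp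
    (continuous_const.mul continuous_id).continuousAt

theorem hasDerivAt_rotCpow {z : ℂ} (hz : exp (-(φ * I)) * z ∈ slitPlane) :
    HasDerivAt (rotCpow φ c) (c * rotCpow φ c z / z) z := by
  have h := (((hasDerivAt_id z).const_mul (exp (-(φ * I)))).cpow_const (c := c) hz).const_mul
    (exp (c * φ * I))
  refine h.congr_deriv ?_
  rw [rotCpow, id, cpow_sub _ _ (slitPlane_ne_zero hz), cpow_one]
  field_simp

theorem equivRealProdCLM_symm_polar (r θ : ℝ) :
    equivRealProdCLM.symm (r * Real.cos θ, r * Real.sin θ) = r * exp (θ * I) := by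
  rw [equivRealProdCLM_symm_apply, exp_mul_I, ← ofReal_cos, ← ofReal_sin]
  push_cast
  ring

theorem ofReal_mul_exp_mem_slitPlane {r ψ : ℝ} (hr : 0 < r) (hψ : |ψ| < Real.pi) :
    (r : ℂ) * exp (ψ * I) ∈ slitPlane := by
  have harg : arg (r * exp (ψ * I)) = ψ := by
    rw [exp_mul_I]
    exact arg_mul_cos_add_sin_mul_I hr ⟨(abs_lt.1 hψ).1, (abs_lt.1 hψ).2.le⟩
  rw [mem_slitPlane_iff_arg, harg]
  exact ⟨(abs_lt.1 hψ).2.ne, mul_ne_zero (ofReal_ne_zero.2 hr.ne') (exp_ne_zero _)⟩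

end Complex

theorem polar_rotate_norm_arg (φ : ℝ) (q : ℝ × ℝ) :
    let w := exp (-(φ * I)) * equivRealProdCLM.symm q
    (‖w‖ * Real.cos (arg w + φ), ‖w‖ * Real.sin (arg w + φ)) = q := by
  intro w
  apply equivRealProdCLM.symm.injective
  rw [equivRealProdCLM_symm_polar, ofReal_add, add_mul, exp_add, ← mul_assoc,
    norm_mul_exp_arg_mul_I, mul_comm, ← mul_assoc, ← exp_add]
  simp

noncomputable def rotCpowIm (φ β : ℝ) (p : ℝ × ℝ) : ℝ :=
  (rotCpow φ β (equivRealProdCLM.symm p)).im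

section rotCpowIm

variable {φ β r θ : ℝ}

theorem rotCpowIm_polar (hr : 0 < r) (hθ : θ - φ ∈ Ioc (-Real.pi) Real.pi) :
    rotCpowIm φ β (r * Real.cos θ, r * Real.sin θ) = r ^ β * Real.sin (β * θ) := by
  have hexp : (r : ℂ) * exp (θ * I) = exp (Real.log r + θ * I) := by
    rw [exp_add, ← ofReal_exp, Real.exp_log hr]
  rw [rotCpowIm, equivRealProdCLM_symm_polar, hexp, rotCpow_exp (by simpa using hθ), exp_im,
    Real.rpow_def_of_pos hr]
  simp [mul_comm]

theorem differentiableAt_rotCpowIm_polar (hr : 0 < r) (hθ : |θ - φ| < Real.pi) :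
    DifferentiableAt ℝ (rotCpowIm φ β) (r * Real.cos θ, r * Real.sin θ) := by
  have hslit : exp (-(φ * I)) * equivRealProdCLM.symm (r * Real.cos θ, r * Real.sin θ)
      ∈ slitPlane := by
    rw [equivRealProdCLM_symm_polar, mul_left_comm, ← exp_add]
    convert ofReal_mul_exp_mem_slitPlane hr hθ using 3
    push_cast
    ring
  exact imCLM.differentiableAt.comp _ <|
    ((hasDerivAt_rotCpow hslit).differentiableAt.restrictScalars ℝ).comp _
      equivRealProdCLM.symm.differentiableAt

theorem rotCpowIm_zero (hβ : β ≠ 0) : rotCpowIm φ β 0 = 0 := by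
  simp [rotCpowIm, rotCpow_zero (ofReal_ne_zero.2 hβ)]

theorem continuousAt_rotCpowIm_zero (hβ : 0 < β) : ContinuousAt (rotCpowIm φ β) 0 := by
  have h : ContinuousAt (rotCpow φ β) (equivRealProdCLM.symm 0) := by
    rw [map_zero]
    exact continuousAt_rotCpow_zero (by simpa using hβ)
  exact continuous_im.continuousAt.comp (h.comp equivRealProdCLM.symm.continuous.continuousAt)

theorem eventuallyEq_rotCpowIm_of_polar {b : ℝ × ℝ → ℝ} {ε : ℝ} (hε : ε ≤ Real.pi)
    (hb : ∀ r θ : ℝ, 0 < r → |θ - φ| < ε →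
      b (r * Real.cos θ, r * Real.sin θ) = r ^ β * Real.sin (β * θ))
    (hr : 0 < r) (hθ : |θ - φ| < ε) :
    b =ᶠ[𝓝 (r * Real.cos θ, r * Real.sin θ)] rotCpowIm φ β := by
  set ρ : ℝ × ℝ → ℂ := fun q => exp (-(φ * I)) * equivRealProdCLM.symm q
  have hρ : ρ (r * Real.cos θ, r * Real.sin θ) = r * exp ((θ - φ : ℝ) * I) := by
    simp only [ρ, equivRealProdCLM_symm_polar, mul_left_comm _ (r : ℂ), ← exp_add]
    push_cast
    ring_nf
  have hslit : ρ (r * Real.cos θ, r * Real.sin θ) ∈ slitPlane :=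
    hρ ▸ ofReal_mul_exp_mem_slitPlane hr (hθ.trans_le hε)
  have harg : arg (ρ (r * Real.cos θ, r * Real.sin θ)) = θ - φ := by
    rw [hρ, exp_mul_I]
    exact arg_mul_cos_add_sin_mul_I hr ⟨by linarith [abs_lt.1 (hθ.trans_le hε)],
      (abs_lt.1 (hθ.trans_le hε)).2.le⟩
  have hρcont : Continuous ρ := by fun_prop
  filter_upwards [hρcont.continuousAt.preimage_mem_nhds (isOpen_slitPlane.mem_nhds hslit),
    ((continuousAt_arg hslit).comp hρcont.continuousAt).preimage_mem_nhds
      (isOpen_lt continuous_abs continuous_const |>.mem_nhds (by simpa [harg] using hθ))]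
    with q hq hq_arg
  rw [← polar_rotate_norm_arg φ q]
  have hw := norm_pos_iff.2 (slitPlane_ne_zero hq)
  rw [hb _ _ hw (by simpa using hq_arg), rotCpowIm_polar hw (by simp [neg_pi_lt_arg, arg_le_pi])]

end rotCpowIm

theorem hasDerivAt_polar_angle {E : Type*} [NormedAddCommGroup E] [NormedSpace ℝ E]
    {b : ℝ × ℝ → E} {r α : ℝ} (hb : DifferentiableAt ℝ b (r * Real.cos α, r * Real.sin α)) :
    HasDerivAt (fun θ => b (r * Real.cos θ, r * Real.sin θ))
      (r • fderiv ℝ b (r * Real.cos α, r * Real.sin α) (-Real.sin α, Real.cos α)) α := by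
  have hγ : HasDerivAt (fun θ => (r * Real.cos θ, r * Real.sin θ))
      (r • (-Real.sin α, Real.cos α)) α := by
    simpa using ((Real.hasDerivAt_cos α).const_mul r).prodMk ((Real.hasDerivAt_sin α).const_mul r)
  rw [← map_smul]
  exact hb.hasFDerivAt.comp_hasDerivAt α hγ

theorem brown_b_mixed_zero_data_general
    (α : ℝ) (hα₁ : Real.pi ≤ α)
    (β : ℝ) (hβ : β = Real.pi / (2 * α))
    (δ : ℝ) (hδ : 0 < δ) (hαδ : α + 2 * δ < 2 * Real.pi)
    (b : ℝ × ℝ → ℝ)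
    (hb : ∀ r θ : ℝ, 0 < r → -δ < θ → θ < α + δ →
      b (r * Real.cos θ, r * Real.sin θ) = r ^ β * Real.sin (β * θ)) :
    (∃ B : ℝ × ℝ → ℝ, ContinuousOn B (closedSector α) ∧
      (∀ p ∈ openSector α, B p = b p) ∧ B ((0 : ℝ), (0 : ℝ)) = 0) ∧
    (∀ t : ℝ, 0 < t → b ((t : ℝ), (0 : ℝ)) = 0) ∧
    (∀ r : ℝ, 0 < r →
      fderiv ℝ b (r * Real.cos α, r * Real.sin α) (-Real.sin α, Real.cos α) = 0) := by
  have hα : 0 < α := Real.pi_pos.trans_le hα₁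
  have hβ₀ : 0 < β := by rw [hβ]; positivity
  have hβα : β * α = Real.pi / 2 := by rw [hβ]; field_simp
  refine ⟨⟨rotCpowIm (α / 2) β, ?_, ?_, rotCpowIm_zero hβ₀.ne'⟩, fun t ht => ?_, fun r hr => ?_⟩
  · rintro _ ⟨r, θ, hr, hθ₀, hθα, rfl⟩
    rcases hr.eq_or_lt with rfl | hr
    · simpa [← Prod.zero_eq_mk] using (continuousAt_rotCpowIm_zero hβ₀).continuousWithinAt
    · exact (differentiableAt_rotCpowIm_polar hr
        (abs_lt.2 ⟨by linarith, by linarith⟩)).continuousAt.continuousWithinAt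
  · rintro _ ⟨r, θ, hr, hθ₀, hθα, rfl⟩
    rw [rotCpowIm_polar hr ⟨by linarith, by linarith⟩, hb r θ hr (by linarith) (by linarith)]
  · simpa using hb t 0 ht (by linarith) (by linarith)
  · have hb' : ∀ r θ : ℝ, 0 < r → |θ - α / 2| < α / 2 + δ →
        b (r * Real.cos θ, r * Real.sin θ) = r ^ β * Real.sin (β * θ) := fun r θ hr hθ =>
      hb r θ hr (by linarith [abs_lt.1 hθ]) (by linarith [abs_lt.1 hθ])
    have hαα : |α - α / 2| < α / 2 + δ := abs_lt.2 ⟨by linarith, by linarith⟩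
    have hdiff : DifferentiableAt ℝ b (r * Real.cos α, r * Real.sin α) :=
      (differentiableAt_rotCpowIm_polar hr (hαα.trans (by linarith))).congr_of_eventuallyEq
        (eventuallyEq_rotCpowIm_of_polar (by linarith) hb' hr hαα)
    have hangle : (fun θ => r ^ β * Real.sin (β * θ)) =ᶠ[𝓝 α]
        fun θ => b (r * Real.cos θ, r * Real.sin θ) :=
      eventually_of_mem (Ioo_mem_nhds (by linarith) (by linarith)) fun θ hθ =>
        (hb r θ hr hθ.1 hθ.2).symm
    have hexplicit : HasDerivAt (fun θ => r ^ β * Real.sin (β * θ)) 0 α := by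
      simpa [hβα] using (((hasDerivAt_id α).const_mul β).sin).const_mul (r ^ β)
    exact (smul_eq_zero.1 ((hasDerivAt_polar_angle hdiff).congr_of_eventuallyEq hangle
      |>.unique hexplicit)).resolve_left hr.ne'

/-- Brown's function `b` solves the mixed problem on the sector
with zero data: it extends continuously to the closed sector with value `0`
at the origin; `b(t,0) = 0` for every `t > 0` (vanishing Dirichlet data on the
ray `θ = 0`); and for every `r > 0` the directional derivative of (the
real-analytic extension of) `b` at `(r cos α, r sin α)` in the unit direction
`(−sin α, cos α)` normal to the ray `θ = α` vanishes (vanishing Neumann data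
on the ray `θ = α`). -/
theorem brown_b_mixed_zero_data
    (α : ℝ) (hα₁ : Real.pi ≤ α) (hα₂ : α < 2 * Real.pi)
    (β : ℝ) (hβ : β = Real.pi / (2 * α))
    (δ : ℝ) (hδ : 0 < δ) (hαδ : α + 2 * δ < 2 * Real.pi)
    (b : ℝ × ℝ → ℝ)
    (hb : ∀ r θ : ℝ, 0 < r → -δ < θ → θ < α + δ →
      b (r * Real.cos θ, r * Real.sin θ) = r ^ β * Real.sin (β * θ)) :
    (∃ B : ℝ × ℝ → ℝ, ContinuousOn B (closedSector α) ∧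
      (∀ p ∈ openSector α, B p = b p) ∧ B ((0 : ℝ), (0 : ℝ)) = 0) ∧
    (∀ t : ℝ, 0 < t → b ((t : ℝ), (0 : ℝ)) = 0) ∧
    (∀ r : ℝ, 0 < r →
      fderiv ℝ b (r * Real.cos α, r * Real.sin α) (-Real.sin α, Real.cos α) = 0) :=
  brown_b_mixed_zero_data_general α hα₁ β hβ δ hδ hαδ b hb
end

section
/- The gradient of b fails to be square-integrable along the Dirichlet ray: ‖∇b(t, 0)‖ = β t^{β−1} for every t > 0 (gradient of the real-analytic extension of b), and consequently ∫₀¹ ‖∇b(t, 0)‖² dt = +∞. -/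
/-!
Near a point `(t, 0)` with `t > 0` the polar angle stays close to `0`, so `b` coincides there
with `Im (z ^ β)`, `z = x + i y`. The complex derivative of `z ↦ z ^ β` at `z = t` is the real
number `β t ^ (β - 1)`, so the real differential of `Im (z ^ β)` there is
`v ↦ β t ^ (β - 1) · v₂`, i.e. `∇b(t, 0) = (0, β t ^ (β - 1))`. Hence
`‖∇b(t, 0)‖² = β² t ^ (2β - 2)`, and `2β - 2 ≤ -1` because `β ≤ 1/2`, so the integral over
`(0, 1)` diverges.
-/

open MeasureTheory

/-- The Euclidean norm of the gradient of `b : ℝ × ℝ → ℝ` at a point. -/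
noncomputable def gradNorm (b : ℝ × ℝ → ℝ) (p : ℝ × ℝ) : ℝ :=
  Real.sqrt ((fderiv ℝ b p ((1 : ℝ), (0 : ℝ))) ^ 2 +
    (fderiv ℝ b p ((0 : ℝ), (1 : ℝ))) ^ 2)

open Complex Filter Topology Set

noncomputable def imCpow (β : ℝ) (p : ℝ × ℝ) : ℝ :=
  (equivRealProdCLM.symm p ^ (β : ℂ)).im

lemma eventuallyEq_imCpow_of_polar {β ε t : ℝ} {b : ℝ × ℝ → ℝ} (hε : 0 < ε) (ht : 0 < t)
    (hb : ∀ r θ : ℝ, 0 < r → θ ∈ Ioo (-ε) ε →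
      b (r * Real.cos θ, r * Real.sin θ) = r ^ β * Real.sin (β * θ)) :
    b =ᶠ[𝓝 (t, 0)] imCpow β := by
  set L : ℝ × ℝ →L[ℝ] ℂ := equivRealProdCLM.symm.toContinuousLinearMap
  have hLt : L (t, 0) = t := by simp [L, equivRealProdCLM_symm_apply]
  have hslit : L (t, 0) ∈ slitPlane := by simp [hLt, mem_slitPlane_iff, ht]
  have hL_slit : ∀ᶠ p in 𝓝 (t, 0), L p ∈ slitPlane :=
    L.continuous.continuousAt.eventually_mem (isOpen_slitPlane.mem_nhds hslit)
  have hL_arg : ∀ᶠ p in 𝓝 (t, 0), arg (L p) ∈ Ioo (-ε) ε := by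
    refine ((continuousAt_arg hslit).comp L.continuous.continuousAt).eventually_mem
      (Ioo_mem_nhds ?_ ?_) <;> simp [hLt, arg_ofReal_of_nonneg ht.le, hε]
  filter_upwards [hL_slit, hL_arg] with p hp_slit hp_arg
  have hpolar := hb ‖L p‖ (arg (L p)) (norm_pos_iff.mpr (slitPlane_ne_zero hp_slit)) hp_arg
  rw [norm_mul_cos_arg, norm_mul_sin_arg] at hpolar
  simpa [imCpow, L, cpow_ofReal_im, mul_comm (arg _)] using hpolar

lemma fderiv_imCpow_apply {β t : ℝ} (ht : 0 < t) (v : ℝ × ℝ) :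
    fderiv ℝ (imCpow β) (t, 0) v = β * t ^ (β - 1) * v.2 := by
  set L : ℝ × ℝ →L[ℝ] ℂ := equivRealProdCLM.symm.toContinuousLinearMap
  have hLt : L (t, 0) = t := by simp [L, equivRealProdCLM_symm_apply]
  have hslit : L (t, 0) ∈ slitPlane := by simp [hLt, mem_slitPlane_iff, ht]
  have hderiv : (β : ℂ) * L (t, 0) ^ ((β : ℂ) - 1) = ((β * t ^ (β - 1) : ℝ) : ℂ) := by
    rw [hLt, ofReal_mul, ofReal_cpow ht.le]
    push_cast
    ring
  have hcpow :=
    (hasStrictDerivAt_cpow_const (c := β) hslit).hasDerivAt.hasFDerivAt.restrictScalars ℝ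
  rw [hderiv] at hcpow
  have himCpow := imCLM.hasFDerivAt.comp (t, 0) (hcpow.comp (t, 0) L.hasFDerivAt)
  rw [show imCpow β = imCLM ∘ (· ^ (β : ℂ)) ∘ L from rfl, himCpow.fderiv]
  simp [L, equivRealProdCLM_symm_apply]
  ring

lemma gradNorm_eq_of_fderiv_apply {b : ℝ × ℝ → ℝ} {p : ℝ × ℝ} {c : ℝ} (hc : 0 ≤ c)
    (h : ∀ v : ℝ × ℝ, fderiv ℝ b p v = c * v.2) : gradNorm b p = c := by
  simp [gradNorm, h, Real.sqrt_sq hc]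

lemma lintegral_Ioo_zero_one_ofReal_rpow_eq_top {s : ℝ} (hs : s ≤ -1) :
    ∫⁻ t in Ioo (0 : ℝ) 1, ENNReal.ofReal (t ^ s) = ⊤ := by
  by_contra hfin
  have hnonneg : 0 ≤ᵐ[volume.restrict (Ioo (0 : ℝ) 1)] fun t : ℝ => t ^ s :=
    (ae_restrict_mem measurableSet_Ioo).mono fun t ht => Real.rpow_nonneg ht.1.le s
  have hint : IntegrableOn (fun t : ℝ => t ^ s) (Ioo 0 1) :=
    (lintegral_ofReal_ne_top_iff_integrable
      (by fun_prop : Measurable fun t : ℝ => t ^ s).aestronglyMeasurable hnonneg).mp hfin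
  linarith [(intervalIntegral.integrableOn_Ioo_rpow_iff one_pos).mp hint]

theorem brown_b_gradient_not_square_integrable_general
    (α : ℝ) (hα₁ : Real.pi ≤ α)
    (β : ℝ) (hβ : β = Real.pi / (2 * α))
    (δ : ℝ) (hδ : 0 < δ)
    (b : ℝ × ℝ → ℝ)
    (hb : ∀ r θ : ℝ, 0 < r → -δ < θ → θ < α + δ →
      b (r * Real.cos θ, r * Real.sin θ) = r ^ β * Real.sin (β * θ)) :
    (∀ t : ℝ, 0 < t → gradNorm b ((t : ℝ), (0 : ℝ)) = β * t ^ (β - 1)) ∧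
    ∫⁻ t in Set.Ioo (0 : ℝ) 1,
      ENNReal.ofReal ((gradNorm b ((t : ℝ), (0 : ℝ))) ^ 2) = ⊤ := by
  have hα : 0 < α := Real.pi_pos.trans_le hα₁
  have hβ₀ : 0 < β := by rw [hβ]; positivity
  have hβ_le : β ≤ 1 / 2 := by
    rw [hβ, div_le_div_iff₀ (by positivity) two_pos]
    linarith
  have hgrad : ∀ t : ℝ, 0 < t → gradNorm b (t, 0) = β * t ^ (β - 1) := fun t ht =>
    gradNorm_eq_of_fderiv_apply (by positivity) fun v => by
      rw [(eventuallyEq_imCpow_of_polar hδ ht fun r θ hr hθ =>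
        hb r θ hr hθ.1 (by linarith [hθ.2])).fderiv_eq, fderiv_imCpow_apply ht]
  refine ⟨hgrad, ?_⟩
  calc ∫⁻ t in Ioo (0 : ℝ) 1, ENNReal.ofReal (gradNorm b (t, 0) ^ 2)
      = ∫⁻ t in Ioo (0 : ℝ) 1, ENNReal.ofReal (β ^ 2) * ENNReal.ofReal (t ^ (2 * β - 2)) := by
        refine setLIntegral_congr_fun measurableSet_Ioo fun t ht => ?_
        rw [hgrad t ht.1, ← ENNReal.ofReal_mul (by positivity), mul_pow,
          ← Real.rpow_mul_natCast ht.1.le]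
        congr 3
        push_cast
        ring
    _ = ENNReal.ofReal (β ^ 2) * ∫⁻ t in Ioo (0 : ℝ) 1, ENNReal.ofReal (t ^ (2 * β - 2)) :=
        lintegral_const_mul' _ _ ENNReal.ofReal_ne_top
    _ = ⊤ := by
        rw [lintegral_Ioo_zero_one_ofReal_rpow_eq_top (by linarith), ENNReal.mul_top]
        positivity

/-- the gradient of Brown's function `b` fails to be
square-integrable along the Dirichlet ray: `‖∇b(t,0)‖ = β t^(β−1)` for every
`t > 0`, and consequently `∫₀¹ ‖∇b(t,0)‖² dt = +∞`. -/
theorem brown_b_gradient_not_square_integrable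
    (α : ℝ) (hα₁ : Real.pi ≤ α) (hα₂ : α < 2 * Real.pi)
    (β : ℝ) (hβ : β = Real.pi / (2 * α))
    (δ : ℝ) (hδ : 0 < δ) (hαδ : α + 2 * δ < 2 * Real.pi)
    (b : ℝ × ℝ → ℝ)
    (hb : ∀ r θ : ℝ, 0 < r → -δ < θ → θ < α + δ →
      b (r * Real.cos θ, r * Real.sin θ) = r ^ β * Real.sin (β * θ)) :
    (∀ t : ℝ, 0 < t → gradNorm b ((t : ℝ), (0 : ℝ)) = β * t ^ (β - 1)) ∧
    ∫⁻ t in Set.Ioo (0 : ℝ) 1,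
      ENNReal.ofReal ((gradNorm b ((t : ℝ), (0 : ℝ))) ^ 2) = ⊤ :=
  brown_b_gradient_not_square_integrable_general α hα₁ β hβ δ hδ b hb
end

section
/- The nontangential maximal function of ∇b is not square-integrable on the Dirichlet ray near the vertex: with (∇b)*(P) = sup{ ‖∇b(X)‖ : X ∈ Γ(P) } for boundary points P of S_α, one has ∫₀¹ ((∇b)*(t, 0))² dt = +∞. -/
/-!
For `α ≥ π` the sector contains the upper half-plane, where `b = Im (z ^ β)`, so
`‖∇b(x, y)‖ = β |z| ^ (β - 1)`. Since the frontier of the sector lies in `{y ≤ 0}`,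
the point `(0, t)` is at distance at least `t` from it and hence lies in `Γ((t, 0))`.
Therefore `(∇b)*(t, 0)² ≥ β² t ^ (2β - 2)`, which is not integrable near `0`
because `2β - 2 ≤ -1`.
-/

open MeasureTheory

/-- Nontangential approach region (aperture parameter `a = 1`) at a boundary
point `P` of the sector: `Γ(P) = {X ∈ S_α : |X − P| < 2 dist(X, ∂S_α)}`. -/
noncomputable def ntRegion (α : ℝ) (P : ℝ × ℝ) : Set (ℝ × ℝ) :=
  {X ∈ openSector α | dist X P < 2 * Metric.infDist X (frontier (openSector α))}

/-- The nontangential maximal function of `‖∇b‖` (valued in `ℝ≥0∞`):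
`(∇b)*(P) = sup {‖∇b(X)‖ : X ∈ Γ(P)}`. -/
noncomputable def ntMaxGrad (α : ℝ) (b : ℝ × ℝ → ℝ) (P : ℝ × ℝ) : ENNReal :=
  ⨆ X ∈ ntRegion α P, ENNReal.ofReal (gradNorm b X)

open Set Filter Topology Complex

lemma Complex.arg_pos_of_im_pos {z : ℂ} (hz : 0 < z.im) : 0 < arg z :=
  (arg_nonneg_iff.2 hz.le).lt_of_ne fun h => hz.ne' (arg_eq_zero_iff.1 h.symm).2

lemma Complex.re_im_eq_polar (z : ℂ) :
    (z.re, z.im) = (‖z‖ * Real.cos (arg z), ‖z‖ * Real.sin (arg z)) := by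
  rw [norm_mul_cos_arg, norm_mul_sin_arg]

section Sector

variable {α : ℝ}

lemma mem_openSector_of_snd_pos (hα : Real.pi ≤ α) {p : ℝ × ℝ} (hp : 0 < p.2) :
    p ∈ openSector α := by
  set z : ℂ := ⟨p.1, p.2⟩
  have hz : 0 < z.im := hp
  exact ⟨‖z‖, arg z, norm_pos_iff.2 (ne_of_apply_ne im hz.ne'), arg_pos_of_im_pos hz,
    (arg_lt_pi_iff.2 (Or.inr hz.ne')).trans_le hα, re_im_eq_polar z⟩

lemma zero_notMem_openSector : ((0 : ℝ), (0 : ℝ)) ∉ openSector α := by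
  rintro ⟨r, θ, hr, -, -, h⟩
  obtain ⟨hc, hs⟩ := Prod.mk.inj h
  have hr2 : r ^ 2 = 0 := by
    linear_combination (-r ^ 2) * Real.sin_sq_add_cos_sq θ - r * Real.sin θ * hs -
      r * Real.cos θ * hc
  exact hr.ne' (pow_eq_zero_iff two_ne_zero |>.1 hr2)

lemma frontier_openSector_subset (hα : Real.pi ≤ α) :
    frontier (openSector α) ⊆ {p : ℝ × ℝ | p.2 ≤ 0} := by
  intro p hp
  by_contra h
  exact hp.2 (interior_maximal (fun _ => mem_openSector_of_snd_pos hα)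
    (isOpen_lt continuous_const continuous_snd) (show 0 < p.2 from not_le.1 h))

lemma frontier_openSector_nonempty (hα : Real.pi ≤ α) : (frontier (openSector α)).Nonempty :=
  nonempty_frontier_iff.2 ⟨⟨(0, 1), mem_openSector_of_snd_pos hα one_pos⟩,
    fun h => zero_notMem_openSector (h ▸ mem_univ _)⟩

lemma snd_le_infDist_frontier_openSector (hα : Real.pi ≤ α) {p : ℝ × ℝ} :
    p.2 ≤ Metric.infDist p (frontier (openSector α)) := by
  refine (Metric.le_infDist (frontier_openSector_nonempty hα)).2 fun q hq => ?_
  have hq2 : q.2 ≤ 0 := frontier_openSector_subset hα hq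
  calc p.2 ≤ |p.2 - q.2| := by linarith [le_abs_self (p.2 - q.2)]
    _ = dist p.2 q.2 := (Real.dist_eq _ _).symm
    _ ≤ dist p q := le_max_right _ _

lemma mem_ntRegion_of_dist_lt (hα : Real.pi ≤ α) {X P : ℝ × ℝ} (hX : 0 < X.2)
    (h : dist X P < 2 * X.2) : X ∈ ntRegion α P :=
  ⟨mem_openSector_of_snd_pos hα hX,
    h.trans_le (by linarith [snd_le_infDist_frontier_openSector hα (p := X)])⟩

end Sector

lemma gradNorm_congr {b g : ℝ × ℝ → ℝ} {p : ℝ × ℝ} (h : b =ᶠ[𝓝 p] g) :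
    gradNorm b p = gradNorm g p := by
  simp only [gradNorm, h.fderiv_eq]

lemma gradNorm_im_of_hasDerivAt {f : ℂ → ℂ} {d : ℂ} {p : ℝ × ℝ}
    (hf : HasDerivAt f d ⟨p.1, p.2⟩) :
    gradNorm (fun q => (f ⟨q.1, q.2⟩).im) p = ‖d‖ := by
  set L : ℝ × ℝ →L[ℝ] ℂ := equivRealProdCLM.symm.toContinuousLinearMap
  have hL : ∀ q, L q = ⟨q.1, q.2⟩ := fun q => rfl
  have hfd : HasFDerivAt (fun q => (f ⟨q.1, q.2⟩).im)
      (imCLM.comp ((((1 : ℂ →L[ℂ] ℂ).smulRight d).restrictScalars ℝ).comp L)) p :=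
    imCLM.hasFDerivAt.comp p ((hf.hasFDerivAt.restrictScalars ℝ).comp p L.hasFDerivAt)
  have h_re : fderiv ℝ (fun q => (f ⟨q.1, q.2⟩).im) p (1, 0) = d.im := by
    simp [hfd.fderiv, hL]
  have h_im : fderiv ℝ (fun q => (f ⟨q.1, q.2⟩).im) p (0, 1) = d.re := by
    simp [hfd.fderiv, hL]
  rw [gradNorm, h_re, h_im, norm_eq_sqrt_sq_add_sq, add_comm]

lemma lintegral_Ioo_ofReal_mul_rpow_eq_top {c s : ℝ} (hc : 0 < c) (hs : s ≤ -1) :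
    ∫⁻ t in Ioo (0 : ℝ) 1, ENNReal.ofReal (c * t ^ s) = ⊤ := by
  have hpow : ∫⁻ t in Ioo (0 : ℝ) 1, ENNReal.ofReal (t ^ s) = ⊤ := by
    by_contra h
    have hint := (lintegral_ofReal_ne_top_iff_integrable
      (by fun_prop) (ae_restrict_of_forall_mem measurableSet_Ioo
        fun t ht => Real.rpow_nonneg ht.1.le s)).1 h
    exact not_lt.2 hs ((intervalIntegral.integrableOn_Ioo_rpow_iff one_pos).1 hint)
  simp_rw [ENNReal.ofReal_mul hc.le]
  rw [lintegral_const_mul' _ _ ENNReal.ofReal_ne_top, hpow,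
    ENNReal.mul_top (ENNReal.ofReal_pos.2 hc).ne']

section Brown

variable {α β δ : ℝ} {b : ℝ × ℝ → ℝ}

lemma eq_im_cpow_of_polar (hα : Real.pi ≤ α) (hδ : 0 ≤ δ)
    (hb : ∀ r θ : ℝ, 0 < r → -δ < θ → θ < α + δ →
      b (r * Real.cos θ, r * Real.sin θ) = r ^ β * Real.sin (β * θ))
    {p : ℝ × ℝ} (hp : 0 < p.2) : b p = ((⟨p.1, p.2⟩ : ℂ) ^ (β : ℂ)).im := by
  set z : ℂ := ⟨p.1, p.2⟩
  have hz : 0 < z.im := hp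
  have hθ := arg_pos_of_im_pos hz
  have hθπ : arg z < Real.pi := arg_lt_pi_iff.2 (Or.inr hz.ne')
  rw [show p = (z.re, z.im) from rfl, re_im_eq_polar,
    hb _ _ (norm_pos_iff.2 (ne_of_apply_ne im hz.ne')) (by linarith) (by linarith),
    cpow_ofReal_im, mul_comm β]

lemma gradNorm_eq_of_eq_im_cpow
    (hb : ∀ p : ℝ × ℝ, 0 < p.2 → b p = ((⟨p.1, p.2⟩ : ℂ) ^ (β : ℂ)).im)
    {p : ℝ × ℝ} (hp : 0 < p.2) :
    gradNorm b p = |β| * ‖(⟨p.1, p.2⟩ : ℂ)‖ ^ (β - 1) := by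
  have hslit : (⟨p.1, p.2⟩ : ℂ) ∈ slitPlane := mem_slitPlane_iff.2 (Or.inr hp.ne')
  have hloc : b =ᶠ[𝓝 p] fun q => ((⟨q.1, q.2⟩ : ℂ) ^ (β : ℂ)).im := by
    filter_upwards [(isOpen_lt continuous_const continuous_snd).mem_nhds hp] with q hq
    exact hb q hq
  rw [gradNorm_congr hloc,
    gradNorm_im_of_hasDerivAt (hasStrictDerivAt_cpow_const hslit).hasDerivAt, norm_mul,
    norm_real, Real.norm_eq_abs, show (β : ℂ) - 1 = ((β - 1 : ℝ) : ℂ) by push_cast; rfl,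
    norm_cpow_real]

lemma ofReal_gradNorm_le_ntMaxGrad {X P : ℝ × ℝ} (hX : X ∈ ntRegion α P) :
    ENNReal.ofReal (gradNorm b X) ≤ ntMaxGrad α b P :=
  le_biSup (fun X => ENNReal.ofReal (gradNorm b X)) hX

lemma ofReal_mul_rpow_le_ntMaxGrad_sq (hα : Real.pi ≤ α) (hβ : 0 < β)
    (hb : ∀ p : ℝ × ℝ, 0 < p.2 → b p = ((⟨p.1, p.2⟩ : ℂ) ^ (β : ℂ)).im)
    {t : ℝ} (ht : 0 < t) :
    ENNReal.ofReal (β ^ 2 * t ^ (2 * β - 2)) ≤ ntMaxGrad α b (t, 0) ^ 2 := by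
  have hX : ((0 : ℝ), t) ∈ ntRegion α (t, 0) := by
    refine mem_ntRegion_of_dist_lt hα ht ?_
    simp only [Prod.dist_eq, dist_zero, Real.norm_eq_abs, abs_of_pos ht, dist_zero_right,
      max_self]
    linarith
  have hgrad : gradNorm b (0, t) = β * t ^ (β - 1) := by
    rw [gradNorm_eq_of_eq_im_cpow hb ht, abs_of_pos hβ]
    simp [norm_def, normSq_apply, Real.sqrt_mul_self ht.le]
  calc ENNReal.ofReal (β ^ 2 * t ^ (2 * β - 2))
      = ENNReal.ofReal (gradNorm b (0, t)) ^ 2 := by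
        rw [hgrad, ← ENNReal.ofReal_pow (by positivity), mul_pow, ← Real.rpow_mul_natCast ht.le]
        ring_nf
    _ ≤ ntMaxGrad α b (t, 0) ^ 2 := by gcongr; exact ofReal_gradNorm_le_ntMaxGrad hX

end Brown

theorem brown_b_ntMax_not_square_integrable_general
    (α : ℝ) (hα₁ : Real.pi ≤ α)
    (β : ℝ) (hβ : β = Real.pi / (2 * α))
    (δ : ℝ) (hδ : 0 < δ)
    (b : ℝ × ℝ → ℝ)
    (hb : ∀ r θ : ℝ, 0 < r → -δ < θ → θ < α + δ →
      b (r * Real.cos θ, r * Real.sin θ) = r ^ β * Real.sin (β * θ)) :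
    ∫⁻ t in Set.Ioo (0 : ℝ) 1, (ntMaxGrad α b ((t : ℝ), (0 : ℝ))) ^ 2 = ⊤ := by
  have hα : 0 < α := Real.pi_pos.trans_le hα₁
  have hβ_pos : 0 < β := by rw [hβ]; positivity
  have hβ_half : 2 * β - 2 ≤ -1 := by
    have h2β : 2 * β = Real.pi / α := by rw [hβ]; field_simp
    linarith [(div_le_one hα).2 hα₁]
  have hb_cpow : ∀ p : ℝ × ℝ, 0 < p.2 → b p = ((⟨p.1, p.2⟩ : ℂ) ^ (β : ℂ)).im :=
    fun _ => eq_im_cpow_of_polar hα₁ hδ.le hb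
  refine top_unique ?_
  rw [← lintegral_Ioo_ofReal_mul_rpow_eq_top (pow_pos hβ_pos 2) hβ_half]
  exact setLIntegral_mono' measurableSet_Ioo fun t ht =>
    ofReal_mul_rpow_le_ntMaxGrad_sq hα₁ hβ_pos hb_cpow ht.1

/-- the nontangential maximal function of `∇b` is not
square-integrable on the Dirichlet ray near the vertex:
`∫₀¹ ((∇b)*(t,0))² dt = +∞`. -/
theorem brown_b_ntMax_not_square_integrable
    (α : ℝ) (hα₁ : Real.pi ≤ α) (hα₂ : α < 2 * Real.pi)
    (β : ℝ) (hβ : β = Real.pi / (2 * α))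
    (δ : ℝ) (hδ : 0 < δ) (hαδ : α + 2 * δ < 2 * Real.pi)
    (b : ℝ × ℝ → ℝ)
    (hb : ∀ r θ : ℝ, 0 < r → -δ < θ → θ < α + δ →
      b (r * Real.cos θ, r * Real.sin θ) = r ^ β * Real.sin (β * θ)) :
    ∫⁻ t in Set.Ioo (0 : ℝ) 1, (ntMaxGrad α b ((t : ℝ), (0 : ℝ))) ^ 2 = ⊤ :=
  brown_b_ntMax_not_square_integrable_general α hα₁ β hβ δ hδ b hb
end
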